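/- Let ε, δ ∈ (0,1). Let (S, 𝒮) be a measurable space and, on a common probability space, let D₁ be an S-valued random element; for each positive integer n with (1−ε)^n ≤ δ let ξ₁ⁿ, …, ξ_nⁿ be i.i.d. ℝ^m-valued random vectors with common law μ, independent of D₁. Let t : S × ℝ^m → ℝ be jointly measurable such that for every s ∈ S the pushforward of μ under z ↦ t(s,z) is atomless. Define i*(n) = min{r ∈ {1,…,n} : Σ_{k=0}^{r−1} C(n,k)(1−ε)^k ε^{n−k} ≥ 1−δ}, let T_n be the i*(n)-th order statistic of t(D₁,ξ₁ⁿ),…,t(D₁,ξ_nⁿ), and let C_n = μ{z ∈ ℝ^m : t(D₁,z) ≤ T_n} be the realized coverage of the calibrated uncertainty set. Then the attained confidence level converges to its target: P(C_n ≥ 1−ε) → 1−δ as n → ∞. -/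

import Mathlib

/-!
Let `q(s)` be the `(1-ε)`-quantile of the law of `t(s, ·)` under `μ`. Since that law has no atoms,
`μ{t(s, ·) ≤ T} ≥ 1-ε` holds iff `T ≥ q(s)`, i.e. iff fewer than `i*` of the scores
`t(s, ξᵢ)` fall below `q(s)`, and each score does so independently with probability exactly
`1-ε`. Conditioning on `D₁` (independent of the `ξᵢ`) gives the distribution-free identity
`P(Cₙ ≥ 1-ε) = ∑_{k < i*} C(n,k) (1-ε)^k ε^(n-k)`.
By minimality of `i*` this sum lies in `[1-δ, 1-δ + b)`, where `b` is the single binomial weight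
at `k = i* - 1`. Every fixed binomial weight tends to `0`, which forces both `i*` and `n - i*` to
infinity, and then Stirling's formula bounds `b` by `√(1/(i*-1) + 1/(n-i*+1)) → 0`.
-/

open MeasureTheory ProbabilityTheory Filter

/-- The `r`-th order statistic (1-based) of the finite tuple `v`: the `r`-th smallest value
among `v 0, …, v (n-1)` (junk value `0` if `r` is out of range). -/
noncomputable def orderStat {n : ℕ} (v : Fin n → ℝ) (r : ℕ) : ℝ :=
  if h : r - 1 < n then v (Tuple.sort v ⟨r - 1, h⟩) else 0

section

open Topology Finset Real

/-- `q` is kept independent of `p` so that `binomTerm (1 - ε) ε` is literally the summand of the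
calibration rule, and so that reflecting `k ↦ n - k` swaps the two parameters. -/
noncomputable def binomTerm (p q : ℝ) (n k : ℕ) : ℝ := n.choose k * p ^ k * q ^ (n - k)

lemma binomTerm_nonneg {p q : ℝ} (hp : 0 ≤ p) (hq : 0 ≤ q) (n k : ℕ) :
    0 ≤ binomTerm p q n k := by
  unfold binomTerm; positivity

lemma binomTerm_sub_swap (p q : ℝ) {n k : ℕ} (hk : k ≤ n) :
    binomTerm p q n (n - k) = binomTerm q p n k := by
  rw [binomTerm, binomTerm, Nat.choose_symm hk, Nat.sub_sub_self hk]; ring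

lemma sum_range_binomTerm (p q : ℝ) (n : ℕ) :
    ∑ k ∈ range (n + 1), binomTerm p q n k = (p + q) ^ n := by
  rw [add_pow]; exact sum_congr rfl fun k _ => by rw [binomTerm]; ring

lemma sum_range_binomTerm_add_sum_range_swap (p q : ℝ) {n k : ℕ} (hk : k ≤ n) :
    ∑ i ∈ range k, binomTerm p q n i + ∑ j ∈ range (n - k + 1), binomTerm q p n j
      = (p + q) ^ n := by
  have upper : ∑ j ∈ range (n - k + 1), binomTerm q p n j
      = ∑ i ∈ Ico k (n + 1), binomTerm p q n i := by
    have hswap : ∀ i ∈ Ico k (n + 1), binomTerm p q n i = binomTerm q p n (n - i) :=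
      fun i hi => (binomTerm_sub_swap q p (by grind)).symm
    rw [sum_congr rfl hswap, sum_Ico_reflect _ _ le_rfl, range_eq_Ico, Nat.sub_self,
      Nat.sub_add_comm hk]
  rw [upper, sum_range_add_sum_Ico _ (by omega), sum_range_binomTerm]

lemma tendsto_binomTerm_atTop {p q : ℝ} (hp : 0 ≤ p) (hq0 : 0 < q) (hq1 : q < 1) (k : ℕ) :
    Tendsto (fun n => binomTerm p q n k) atTop (𝓝 0) := by
  have hlim : Tendsto (fun n : ℕ => (p / q) ^ k * ((n : ℝ) ^ k * q ^ n)) atTop (𝓝 0) := by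
    simpa using (tendsto_pow_const_mul_const_pow_of_abs_lt_one k
      (abs_lt.2 ⟨by linarith, hq1⟩)).const_mul ((p / q) ^ k)
  refine squeeze_zero' (Eventually.of_forall fun n => binomTerm_nonneg hp hq0.le n k) ?_ hlim
  filter_upwards [eventually_ge_atTop k] with n hn
  rw [binomTerm, pow_sub₀ q hq0.ne' hn, div_pow]
  have hchoose : (n.choose k : ℝ) ≤ (n : ℝ) ^ k := by exact_mod_cast Nat.choose_le_pow n k
  calc (n.choose k : ℝ) * p ^ k * (q ^ n / q ^ k)
        = (n.choose k : ℝ) * (p ^ k / q ^ k * q ^ n) := by ring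
    _ ≤ (n : ℝ) ^ k * (p ^ k / q ^ k * q ^ n) := by gcongr
    _ = _ := by ring

lemma tendsto_sum_range_binomTerm_atTop {p q : ℝ} (hp : 0 ≤ p) (hq0 : 0 < q) (hq1 : q < 1)
    (K : ℕ) : Tendsto (fun n => ∑ k ∈ range K, binomTerm p q n k) atTop (𝓝 0) := by
  simpa using tendsto_finsetSum (range K) fun k _ => tendsto_binomTerm_atTop hp hq0 hq1 k

lemma factorial_le_exp_one_mul_sqrt_mul_pow {n : ℕ} (hn : n ≠ 0) :
    (n.factorial : ℝ) ≤ exp 1 * √n * (n / exp 1) ^ n := by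
  have hseq : Stirling.stirlingSeq n ≤ exp 1 / √2 := by
    obtain ⟨m, rfl⟩ := Nat.exists_eq_succ_of_ne_zero hn
    simpa [Stirling.stirlingSeq_one] using Stirling.stirlingSeq'_antitone (Nat.zero_le m)
  have hpos : 0 < √(2 * n) * (n / exp 1) ^ n := by positivity
  have hsqrt : √(2 * n) = √2 * √n := by rw [sqrt_mul zero_le_two]
  calc (n.factorial : ℝ) = Stirling.stirlingSeq n * (√(2 * n) * (n / exp 1) ^ n) := by
        rw [Stirling.stirlingSeq, div_mul_cancel₀ _ hpos.ne']
    _ ≤ exp 1 / √2 * (√(2 * n) * (n / exp 1) ^ n) := by gcongr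
    _ = exp 1 * √n * (n / exp 1) ^ n := by
        rw [hsqrt]; field_simp

lemma pow_le_pow_mul_exp {x c : ℝ} (hx : 0 ≤ x) (hc : 0 < c) (k : ℕ) :
    x ^ k ≤ c ^ k * exp (k * (x / c - 1)) := by
  calc x ^ k = c ^ k * (x / c) ^ k := by rw [← mul_pow, mul_div_cancel₀ _ hc.ne']
    _ ≤ c ^ k * exp (x / c - 1) ^ k := by
        gcongr; linarith [add_one_le_exp (x / c - 1)]
    _ = c ^ k * exp (k * (x / c - 1)) := by rw [← exp_nat_mul]

lemma pow_mul_pow_le_of_add_eq_one {p q : ℝ} (hp : 0 ≤ p) (hq : 0 ≤ q) (hpq : p + q = 1)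
    {k j : ℕ} (hk : k ≠ 0) (hj : j ≠ 0) :
    p ^ k * q ^ j ≤ (k / (k + j) : ℝ) ^ k * (j / (k + j) : ℝ) ^ j := by
  have hk' : (0 : ℝ) < k := by positivity
  have hj' : (0 : ℝ) < j := by positivity
  have hexp : (k : ℝ) * (p / (k / (k + j)) - 1) + j * (q / (j / (k + j)) - 1) = 0 := by
    field_simp; linear_combination (↑k + ↑j) * hpq
  calc p ^ k * q ^ j
      ≤ ((k / (k + j) : ℝ) ^ k * exp (k * (p / (k / (k + j)) - 1))) *
        ((j / (k + j) : ℝ) ^ j * exp (j * (q / (j / (k + j)) - 1))) := by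
        gcongr
        · exact pow_le_pow_mul_exp hp (by positivity) k
        · exact pow_le_pow_mul_exp hq (by positivity) j
    _ = (k / (k + j) : ℝ) ^ k * (j / (k + j) : ℝ) ^ j := by
        rw [mul_mul_mul_comm, ← exp_add, hexp, exp_zero, mul_one]

/-- Stirling's bounds `√(2πn) (n/e)^n ≤ n! ≤ e √n (n/e)^n`: the powers `(n/e)^n` cancel exactly,
leaving `e / (2π) · √((k + j) / (k j))`. -/
lemma choose_mul_pow_mul_pow_le {k j : ℕ} (hk : k ≠ 0) (hj : j ≠ 0) :
    ((k + j).choose k : ℝ) * (k / (k + j) : ℝ) ^ k * (j / (k + j) : ℝ) ^ j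
      ≤ √(1 / k + 1 / j) := by
  have hk' : (0 : ℝ) < k := by positivity
  have hj' : (0 : ℝ) < j := by positivity
  set A : ℝ := (k / exp 1) ^ k * (j / exp 1) ^ j
  have hA : 0 < A := by positivity
  have hnum : ((k + j).factorial : ℝ) * (k / (k + j) : ℝ) ^ k * (j / (k + j) : ℝ) ^ j
      ≤ exp 1 * √(k + j) * A := by
    have h := factorial_le_exp_one_mul_sqrt_mul_pow (n := k + j) (by omega)
    push_cast at h
    calc _ ≤ exp 1 * √(k + j) * ((k + j) / exp 1) ^ (k + j) * (k / (k + j) : ℝ) ^ k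
          * (j / (k + j) : ℝ) ^ j := by gcongr
      _ = exp 1 * √(k + j) * (((k + j) / exp 1 * (k / (k + j))) ^ k
          * ((k + j) / exp 1 * (j / (k + j))) ^ j) := by rw [mul_pow, mul_pow, pow_add]; ring
      _ = exp 1 * √(k + j) * A := by
          have hcancel : ∀ x : ℝ, (k + j) / exp 1 * (x / (k + j)) = x / exp 1 := fun x => by
            field_simp
          rw [hcancel, hcancel]
  have hden : 2 * π * √(k * j) * A ≤ (k.factorial : ℝ) * j.factorial := by
    have hsqrt : √(2 * π * k) * √(2 * π * j) = 2 * π * √(k * j) := by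
      rw [← sqrt_mul (by positivity),
        show 2 * π * k * (2 * π * j) = (2 * π) ^ 2 * (k * j) by ring, sqrt_mul (by positivity),
        sqrt_sq (by positivity)]
    calc 2 * π * √(k * j) * A
          = (√(2 * π * k) * (k / exp 1) ^ k) * (√(2 * π * j) * (j / exp 1) ^ j) := by
          rw [← hsqrt]; ring
      _ ≤ _ := mul_le_mul (Stirling.le_factorial_stirling k) (Stirling.le_factorial_stirling j)
          (by positivity) (by positivity)
  have hchoose : ((k + j).choose k : ℝ) = (k + j).factorial / (k.factorial * j.factorial) := by
    rw [Nat.cast_choose ℝ (Nat.le_add_right k j), Nat.add_sub_cancel_left]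
  have hsqrt : √(1 / k + 1 / j) = √(k + j) / √(k * j) := by
    rw [← sqrt_div' _ (by positivity)]; congr 1; field_simp; ring
  have he : exp 1 / (2 * π) ≤ 1 := by
    rw [div_le_one (by positivity)]; linarith [exp_one_lt_d9, pi_gt_three]
  calc ((k + j).choose k : ℝ) * (k / (k + j) : ℝ) ^ k * (j / (k + j) : ℝ) ^ j
      = ((k + j).factorial : ℝ) * (k / (k + j) : ℝ) ^ k * (j / (k + j) : ℝ) ^ j
        / (k.factorial * j.factorial) := by rw [hchoose]; ring
    _ ≤ exp 1 * √(k + j) * A / (2 * π * √(k * j) * A) :=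
        div_le_div₀ (by positivity) hnum (by positivity) hden
    _ = exp 1 / (2 * π) * (√(k + j) / √(k * j)) := by field_simp
    _ ≤ √(1 / k + 1 / j) := by rw [hsqrt]; exact mul_le_of_le_one_left (by positivity) he

lemma binomTerm_add_le_sqrt {p q : ℝ} (hp : 0 ≤ p) (hq : 0 ≤ q) (hpq : p + q = 1)
    {k j : ℕ} (hk : k ≠ 0) (hj : j ≠ 0) : binomTerm p q (k + j) k ≤ √(1 / k + 1 / j) := by
  rw [binomTerm, Nat.add_sub_cancel_left, mul_assoc]
  calc ((k + j).choose k : ℝ) * (p ^ k * q ^ j)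
      ≤ ((k + j).choose k : ℝ) * ((k / (k + j) : ℝ) ^ k * (j / (k + j) : ℝ) ^ j) := by
        gcongr ?_ * ?_
        exact pow_mul_pow_le_of_add_eq_one hp hq hpq hk hj
    _ ≤ √(1 / k + 1 / j) := by rw [← mul_assoc]; exact choose_mul_pow_mul_pow_le hk hj

lemma tendsto_binomTerm_of_tendsto {p q : ℝ} (hp : 0 ≤ p) (hq : 0 ≤ q) (hpq : p + q = 1)
    {k : ℕ → ℕ} (hk : Tendsto k atTop atTop) (hnk : Tendsto (fun n => n - k n) atTop atTop) :
    Tendsto (fun n => binomTerm p q n (k n)) atTop (𝓝 0) := by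
  have hinv : ∀ {f : ℕ → ℕ}, Tendsto f atTop atTop →
      Tendsto (fun n => 1 / (f n : ℝ)) atTop (𝓝 0) := fun hf => by
    simpa only [one_div, Function.comp_def] using
      tendsto_inv_atTop_zero.comp (tendsto_natCast_atTop_atTop.comp hf)
  have hbound : Tendsto (fun n => √(1 / (k n : ℝ) + 1 / (n - k n : ℕ))) atTop (𝓝 0) := by
    simpa using ((hinv hk).add (hinv hnk)).sqrt
  refine squeeze_zero' (Eventually.of_forall fun n => binomTerm_nonneg hp hq n (k n)) ?_ hbound
  filter_upwards [hk.eventually_ge_atTop 1, hnk.eventually_ge_atTop 1] with n h1 h2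
  have hn : k n + (n - k n) = n := by omega
  simpa only [hn] using
    binomTerm_add_le_sqrt hp hq hpq (k := k n) (j := n - k n) (by omega) (by omega)

lemma lt_of_isLeast_setOf {F : ℕ → ℝ} {c : ℝ} {n r s : ℕ}
    (hr : IsLeast {s | 1 ≤ s ∧ s ≤ n ∧ c ≤ F s} r) (hs : 1 ≤ s) (hsr : s < r) : F s < c := by
  by_contra! hle
  have := hr.2 ⟨hs, by have := hr.1.2.1; omega, hle⟩
  omega

section CalibratedIndex

variable {p q c : ℝ} {r : ℕ → ℕ}

lemma tendsto_pred_of_isLeast (hp : 0 ≤ p) (hq0 : 0 < q) (hq1 : q < 1) (hc : 0 < c)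
    (hr : ∀ᶠ n in atTop,
      IsLeast {s | 1 ≤ s ∧ s ≤ n ∧ c ≤ ∑ k ∈ range s, binomTerm p q n k} (r n)) :
    Tendsto (fun n => r n - 1) atTop atTop := by
  refine tendsto_atTop.2 fun C => ?_
  filter_upwards [hr,
    (tendsto_sum_range_binomTerm_atTop hp hq0 hq1 (C + 1)).eventually_lt_const hc]
    with n hrn hsmall
  by_contra! hlt
  have hmono : ∑ k ∈ range (r n), binomTerm p q n k ≤ ∑ k ∈ range (C + 1), binomTerm p q n k :=
    sum_le_sum_of_subset_of_nonneg (range_subset_range.2 (by omega))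
      fun k _ _ => binomTerm_nonneg hp hq0.le n k
  linarith [hrn.1.2.2]

lemma tendsto_sub_pred_of_isLeast (hp0 : 0 < p) (hq0 : 0 < q) (hpq : p + q = 1) (hc0 : 0 < c)
    (hc1 : c < 1)
    (hr : ∀ᶠ n in atTop,
      IsLeast {s | 1 ≤ s ∧ s ≤ n ∧ c ≤ ∑ k ∈ range s, binomTerm p q n k} (r n)) :
    Tendsto (fun n => n - (r n - 1)) atTop atTop := by
  refine tendsto_atTop.2 fun C => ?_
  filter_upwards [hr,
    (tendsto_pred_of_isLeast hp0.le hq0 (by linarith) hc0 hr).eventually_ge_atTop 1,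
    (tendsto_sum_range_binomTerm_atTop hq0.le hp0 (by linarith) (C + 1)).eventually_lt_const
      (sub_pos.2 hc1)] with n hrn hr2 hsmall
  have hlower := lt_of_isLeast_setOf hrn hr2 (by omega)
  have hsplit := sum_range_binomTerm_add_sum_range_swap p q (n := n) (k := r n - 1)
    (by have := hrn.1.2.1; omega)
  rw [hpq, one_pow] at hsplit
  by_contra! hlt
  have hmono : ∑ j ∈ range (n - (r n - 1) + 1), binomTerm q p n j
      ≤ ∑ j ∈ range (C + 1), binomTerm q p n j :=
    sum_le_sum_of_subset_of_nonneg (range_subset_range.2 (by omega))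
      fun k _ _ => binomTerm_nonneg hq0.le hp0.le n k
  linarith

theorem tendsto_sum_binomTerm_of_isLeast (hp0 : 0 < p) (hq0 : 0 < q) (hpq : p + q = 1)
    (hc0 : 0 < c) (hc1 : c < 1)
    (hr : ∀ᶠ n in atTop,
      IsLeast {s | 1 ≤ s ∧ s ≤ n ∧ c ≤ ∑ k ∈ range s, binomTerm p q n k} (r n)) :
    Tendsto (fun n => ∑ k ∈ range (r n), binomTerm p q n k) atTop (𝓝 c) := by
  have hpred := tendsto_pred_of_isLeast hp0.le hq0 (by linarith) hc0 hr
  have hlast : Tendsto (fun n => binomTerm p q n (r n - 1)) atTop (𝓝 0) :=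
    tendsto_binomTerm_of_tendsto hp0.le hq0.le hpq hpred
      (tendsto_sub_pred_of_isLeast hp0 hq0 hpq hc0 hc1 hr)
  refine tendsto_of_tendsto_of_tendsto_of_le_of_le' tendsto_const_nhds
    (by simpa using tendsto_const_nhds.add hlast) (hr.mono fun n hrn => hrn.1.2.2) ?_
  filter_upwards [hr, hpred.eventually_ge_atTop 1] with n hrn hr2
  have hsucc : r n - 1 + 1 = r n := by omega
  calc ∑ k ∈ range (r n), binomTerm p q n k
      = ∑ k ∈ range (r n - 1), binomTerm p q n k + binomTerm p q n (r n - 1) := by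
        rw [← sum_range_succ, hsucc]
    _ ≤ c + binomTerm p q n (r n - 1) := by
        gcongr; exact (lt_of_isLeast_setOf hrn hr2 (by omega)).le

end CalibratedIndex

lemma Monotone.card_filter_lt_le_iff {α : Type*} [LinearOrder α] {n : ℕ} {f : Fin n → α}
    (hf : Monotone f) (a : Fin n) (c : α) : #{j | f j < c} ≤ a ↔ c ≤ f a := by
  constructor
  · intro hcard
    by_contra! hlt
    have hsub : Iic a ⊆ ({j | f j < c} : Finset (Fin n)) := fun j hj =>
      mem_filter.2 ⟨mem_univ j, (hf (mem_Iic.1 hj)).trans_lt hlt⟩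
    have := card_le_card hsub
    rw [Fin.card_Iic] at this
    omega
  · intro hle
    have hsub : ({j | f j < c} : Finset (Fin n)) ⊆ Iio a := fun j hj =>
      mem_Iio.2 (lt_of_not_ge fun haj => (hle.trans (hf haj)).not_gt (mem_filter.1 hj).2)
    simpa using card_le_card hsub

lemma card_filter_lt_lt_iff_le_orderStat {n : ℕ} (v : Fin n → ℝ) {r : ℕ} (hr1 : 1 ≤ r)
    (hrn : r ≤ n) (c : ℝ) : #{i | v i < c} < r ↔ c ≤ orderStat v r := by
  have hr : r - 1 < n := by omega
  have hperm : #{i | v i < c} = #{j | v (Tuple.sort v j) < c} := by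
    nth_rw 1 [← map_univ_equiv (Tuple.sort v)]
    rw [filter_map, card_map]; rfl
  have hsorted := (Tuple.monotone_sort v).card_filter_lt_le_iff ⟨r - 1, hr⟩ c
  simp only [Function.comp_apply] at hsorted
  rw [orderStat, dif_pos hr, ← hsorted, hperm]
  omega

lemma continuous_cdf (ν : Measure ℝ) [IsProbabilityMeasure ν] [NullSingletonClass ν] :
    Continuous (cdf ν) := by
  refine continuous_iff_continuousAt.2 fun x => ?_
  rw [(monotone_cdf ν).continuousAt_iff_leftLim_eq_rightLim,
    rightLim_eq_of_tendsto (((cdf ν).right_continuous x).mono Set.Ioi_subset_Ici_self)]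
  have hjump := (cdf ν).measure_singleton x
  rw [measure_cdf, measure_singleton, eq_comm, ENNReal.ofReal_eq_zero] at hjump
  linarith [(monotone_cdf ν).leftLim_le (le_refl x)]

lemma exists_quantile (ν : Measure ℝ) [IsProbabilityMeasure ν] [NullSingletonClass ν] {p : ℝ}
    (hp0 : 0 < p) (hp1 : p < 1) :
    ∃ q, (∀ x, ENNReal.ofReal p ≤ ν (Set.Iic x) ↔ q ≤ x) ∧ ν (Set.Iio q) = ENNReal.ofReal p := by
  have hne : {x | p ≤ cdf ν x}.Nonempty :=
    ((tendsto_cdf_atTop (μ := ν)).eventually_const_lt hp1).exists.imp fun _ h => h.le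
  obtain ⟨x₀, hx₀⟩ := eventually_atBot.1 ((tendsto_cdf_atBot (μ := ν)).eventually_lt_const hp0)
  have hbdd : BddBelow {x | p ≤ cdf ν x} :=
    ⟨x₀, fun y hy => le_of_not_ge fun hyx => (hx₀ y hyx).not_ge hy⟩
  have hmem := (isClosed_le continuous_const (continuous_cdf ν)).csInf_mem hne hbdd
  set q := sInf {x | p ≤ cdf ν x}
  have hiff : ∀ x, p ≤ cdf ν x ↔ q ≤ x :=
    fun x => ⟨fun hx => csInf_le hbdd hx, fun hx => hmem.trans (monotone_cdf ν hx)⟩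
  have hcdf_le : cdf ν q ≤ p := by
    have htend : Tendsto (cdf ν) (𝓝[<] q) (𝓝 (cdf ν q)) :=
      (continuous_cdf ν).continuousAt.tendsto.mono_left nhdsWithin_le_nhds
    refine le_of_tendsto htend (eventually_nhdsWithin_of_forall fun x hx => ?_)
    exact (lt_of_not_ge fun h => (Set.mem_Iio.1 hx).not_ge ((hiff x).1 h)).le
  refine ⟨q, fun x => ?_, ?_⟩
  · rw [← ofReal_cdf, ENNReal.ofReal_le_ofReal_iff (cdf_nonneg ν x), hiff]
  · rw [measure_congr Iio_ae_eq_Iic, ← ofReal_cdf, le_antisymm hcdf_le hmem]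

lemma exists_measurable_quantile_section {S β : Type*} [MeasurableSpace S] [MeasurableSpace β]
    {μ : Measure β} [IsProbabilityMeasure μ] {t : S × β → ℝ} (ht : Measurable t)
    (hatomless : ∀ s x, μ.map (fun z => t (s, z)) {x} = 0) {p : ℝ} (hp0 : 0 < p) (hp1 : p < 1) :
    ∃ q : S → ℝ, Measurable q ∧ (∀ s x, ENNReal.ofReal p ≤ μ {z | t (s, z) ≤ x} ↔ q s ≤ x) ∧
      ∀ s, μ {z | t (s, z) < q s} = ENNReal.ofReal p := by
  have hts : ∀ s, Measurable fun z => t (s, z) := fun s => ht.comp measurable_prodMk_left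
  have hquantile : ∀ s, ∃ q, (∀ x, ENNReal.ofReal p ≤ μ {z | t (s, z) ≤ x} ↔ q ≤ x) ∧
      μ {z | t (s, z) < q} = ENNReal.ofReal p := by
    intro s
    have := Measure.isProbabilityMeasure_map (μ := μ) (hts s).aemeasurable
    have : NullSingletonClass (μ.map fun z => t (s, z)) := ⟨hatomless s⟩
    obtain ⟨q, hle, hlt⟩ := exists_quantile (μ.map fun z => t (s, z)) hp0 hp1
    rw [Measure.map_apply (hts s) measurableSet_Iio] at hlt
    exact ⟨q, fun x => by rw [← hle, Measure.map_apply (hts s) measurableSet_Iic]; rfl, hlt⟩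
  choose q hq_le hq_lt using hquantile
  refine ⟨q, measurable_of_Iic fun x => ?_, hq_le, hq_lt⟩
  have hpre : q ⁻¹' Set.Iic x = {s | ENNReal.ofReal p ≤ μ (Prod.mk s ⁻¹' (t ⁻¹' Set.Iic x))} :=
    Set.ext fun s => (hq_le s x).symm
  rw [hpre]
  exact measurableSet_le measurable_const (measurable_measure_prodMk_left (ht measurableSet_Iic))

lemma measurable_card_filter {δ ι : Type*} [MeasurableSpace δ] [Fintype ι] {p : ι → δ → Prop}
    [∀ i x, Decidable (p i x)] (hp : ∀ i, MeasurableSet {x | p i x}) :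
    Measurable fun x => #{i | p i x} := by
  simp_rw [card_filter]
  exact Finset.measurable_sum _ fun i _ => Measurable.ite (hp i) measurable_const measurable_const

lemma ProbabilityTheory.IndepFun.measure_preimage_eq_of_forall_section {Ω β γ : Type*}
    [MeasurableSpace Ω] [MeasurableSpace β] [MeasurableSpace γ] {P : Measure Ω}
    [IsProbabilityMeasure P]
    {X : Ω → β} {Y : Ω → γ} (hXY : IndepFun X Y P) (hX : Measurable X) (hY : Measurable Y)
    {E : Set (β × γ)} (hE : MeasurableSet E) {c : ENNReal}
    (hc : ∀ b, P (Y ⁻¹' (Prod.mk b ⁻¹' E)) = c) :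
    P ((fun ω => (X ω, Y ω)) ⁻¹' E) = c := by
  have : IsProbabilityMeasure (P.map X) := Measure.isProbabilityMeasure_map hX.aemeasurable
  rw [← Measure.map_apply (hX.prodMk hY) hE,
    (indepFun_iff_map_prod_eq_prod_map_map hX.aemeasurable hY.aemeasurable).1 hXY,
    Measure.prod_apply hE]
  simp_rw [Measure.map_apply hY (measurable_prodMk_left hE), hc]
  simp

lemma setOf_filter_mem_eq {Ω α ι : Type*} [Fintype ι] [DecidableEq ι] (f : ι → Ω → α)
    (A : Set α) [DecidablePred (· ∈ A)] (S : Finset ι) :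
    {ω | ({i | f i ω ∈ A} : Finset ι) = S} = ⋂ i, f i ⁻¹' (if i ∈ S then A else Aᶜ) := by
  ext ω
  simp only [Set.mem_ofPred_eq, Set.mem_iInter, Set.mem_preimage, Finset.ext_iff, mem_filter,
    mem_univ, true_and]
  refine forall_congr' fun i => ?_
  split_ifs with hi <;> simp [hi]

section IndependentTrials

variable {Ω α ι : Type*} [MeasurableSpace Ω] [MeasurableSpace α] [Fintype ι] [DecidableEq ι]
  {P : Measure Ω} [IsProbabilityMeasure P] {f : ι → Ω → α} {A : Set α} [DecidablePred (· ∈ A)]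
  {a : ENNReal}

lemma measurableSet_setOf_filter_mem_eq (hf : ∀ i, Measurable (f i)) (hA : MeasurableSet A)
    (S : Finset ι) : MeasurableSet {ω | ({i | f i ω ∈ A} : Finset ι) = S} := by
  have hS : ∀ i, MeasurableSet (if i ∈ S then A else Aᶜ) := fun i => by
    split_ifs; exacts [hA, hA.compl]
  rw [setOf_filter_mem_eq]
  exact .iInter fun i => hf i (hS i)

lemma measure_filter_mem_eq (hf : ∀ i, Measurable (f i)) (hind : iIndepFun f P)
    (hA : MeasurableSet A) (ha : ∀ i, P (f i ⁻¹' A) = a) (S : Finset ι) :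
    P {ω | ({i | f i ω ∈ A} : Finset ι) = S} = a ^ #S * (1 - a) ^ (Fintype.card ι - #S) := by
  have hfactor : ∀ i, P (f i ⁻¹' (if i ∈ S then A else Aᶜ)) = if i ∈ S then a else 1 - a := by
    intro i
    split_ifs
    · exact ha i
    · rw [Set.preimage_compl, prob_compl_eq_one_sub (hf i hA), ha]
  have hS : ∀ i, MeasurableSet (if i ∈ S then A else Aᶜ) := fun i => by
    split_ifs; exacts [hA, hA.compl]
  rw [setOf_filter_mem_eq, hind.meas_iInter fun i => ⟨_, hS i, rfl⟩]
  simp_rw [hfactor]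
  rw [prod_ite, prod_const, prod_const, filter_mem_eq_inter, univ_inter, ← card_compl]
  congr 3
  ext i
  simp

lemma measure_card_filter_mem_eq (hf : ∀ i, Measurable (f i)) (hind : iIndepFun f P)
    (hA : MeasurableSet A) (ha : ∀ i, P (f i ⁻¹' A) = a) (k : ℕ) :
    P {ω | #{i | f i ω ∈ A} = k}
      = (Fintype.card ι).choose k * a ^ k * (1 - a) ^ (Fintype.card ι - k) := by
  have hset : {ω | #{i | f i ω ∈ A} = k}
      = (fun ω => ({i | f i ω ∈ A} : Finset ι)) ⁻¹' ↑(powersetCard k (univ : Finset ι)) := by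
    ext ω; simp
  rw [hset, ← sum_measure_preimage_singleton _
    fun S _ => measurableSet_setOf_filter_mem_eq hf hA S]
  calc ∑ S ∈ powersetCard k univ, P ((fun ω => ({i | f i ω ∈ A} : Finset ι)) ⁻¹' {S})
      = ∑ S ∈ powersetCard k (univ : Finset ι), a ^ k * (1 - a) ^ (Fintype.card ι - k) :=
        sum_congr rfl fun S hS => by
          rw [← (mem_powersetCard_univ.1 hS)]; exact measure_filter_mem_eq hf hind hA ha S
    _ = _ := by rw [sum_const, card_powersetCard, card_univ, nsmul_eq_mul, mul_assoc]

lemma measure_card_filter_mem_lt (hf : ∀ i, Measurable (f i)) (hind : iIndepFun f P)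
    (hA : MeasurableSet A) (ha : ∀ i, P (f i ⁻¹' A) = a) (r : ℕ) :
    P {ω | #{i | f i ω ∈ A} < r}
      = ∑ k ∈ range r, (Fintype.card ι).choose k * a ^ k * (1 - a) ^ (Fintype.card ι - k) := by
  have hset : {ω | #{i | f i ω ∈ A} < r} = (fun ω => #{i | f i ω ∈ A}) ⁻¹' ↑(range r) := by
    ext ω; simp
  rw [hset, ← sum_measure_preimage_singleton _
    fun k _ => measurable_card_filter (fun i => hf i hA) (measurableSet_singleton k)]
  exact sum_congr rfl fun k _ => measure_card_filter_mem_eq hf hind hA ha k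

end IndependentTrials

lemma ofReal_sum_binomTerm {p q : ℝ} (hp : 0 ≤ p) (hq : 0 ≤ q) (n r : ℕ) :
    ENNReal.ofReal (∑ k ∈ range r, binomTerm p q n k)
      = ∑ k ∈ range r, n.choose k * ENNReal.ofReal p ^ k * ENNReal.ofReal q ^ (n - k) := by
  rw [ENNReal.ofReal_sum_of_nonneg fun k _ => binomTerm_nonneg hp hq n k]
  refine sum_congr rfl fun k _ => ?_
  rw [binomTerm, ENNReal.ofReal_mul (by positivity), ENNReal.ofReal_mul (by positivity),
    ENNReal.ofReal_natCast, ENNReal.ofReal_pow hp, ENNReal.ofReal_pow hq]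

theorem measure_coverage_eq_sum_binomTerm {Ω S β : Type*} [MeasurableSpace Ω] [MeasurableSpace S]
    [MeasurableSpace β] {P : Measure Ω} [IsProbabilityMeasure P] {n : ℕ} {ε : ℝ}
    (hε0 : 0 < ε) (hε1 : ε < 1) {D : Ω → S} (hD : Measurable D) {X : Fin n → Ω → β}
    (hX : ∀ i, Measurable (X i)) {μ : Measure β} [IsProbabilityMeasure μ] (hiid : iIndepFun X P)
    (hlaw : ∀ i, P.map (X i) = μ) (hindep : IndepFun D (fun ω i => X i ω) P)
    {t : S × β → ℝ} (ht : Measurable t) (hatomless : ∀ s x, μ.map (fun z => t (s, z)) {x} = 0)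
    {r : ℕ} (hr1 : 1 ≤ r) (hrn : r ≤ n) :
    P {ω | ENNReal.ofReal (1 - ε) ≤ μ {z | t (D ω, z) ≤ orderStat (fun i => t (D ω, X i ω)) r}}
      = ENNReal.ofReal (∑ k ∈ range r, binomTerm (1 - ε) ε n k) := by
  obtain ⟨q, hq, hq_le, hq_lt⟩ :=
    exists_measurable_quantile_section ht hatomless (sub_pos.2 hε1) (by linarith : 1 - ε < 1)
  set E : Set (S × (Fin n → β)) := {sx | #{i | t (sx.1, sx.2 i) < q sx.1} < r}
  have hE : MeasurableSet E := measurable_card_filter (fun i => measurableSet_lt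
    (ht.comp (measurable_fst.prodMk ((measurable_pi_apply i).comp measurable_snd)))
    (hq.comp measurable_fst)) measurableSet_Iio
  have hevent : {ω | ENNReal.ofReal (1 - ε) ≤
      μ {z | t (D ω, z) ≤ orderStat (fun i => t (D ω, X i ω)) r}}
      = (fun ω => (D ω, fun i => X i ω)) ⁻¹' E := by
    ext ω
    exact (hq_le _ _).trans (card_filter_lt_lt_iff_le_orderStat _ hr1 hrn _).symm
  rw [hevent, hindep.measure_preimage_eq_of_forall_section hD (measurable_pi_lambda _ hX) hE]
  intro s
  have hA : MeasurableSet {z | t (s, z) < q s} :=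
    (ht.comp measurable_prodMk_left) measurableSet_Iio
  have hprob : ∀ i, P (X i ⁻¹' {z | t (s, z) < q s}) = ENNReal.ofReal (1 - ε) := fun i => by
    rw [← Measure.map_apply (hX i) hA, hlaw i, hq_lt]
  have hcompl : 1 - ENNReal.ofReal (1 - ε) = ENNReal.ofReal ε := by
    rw [← ENNReal.ofReal_one, ← ENNReal.ofReal_sub _ (by linarith), sub_sub_cancel]
  rw [ofReal_sum_binomTerm (by linarith) hε0.le, ← hcompl]
  have h := measure_card_filter_mem_lt hX hiid hA hprob r
  rw [Fintype.card_fin] at h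
  exact h

end

/-- asymptotic tightness of the confidence level: the attained confidence
level `P(C_n ≥ 1-ε)`, where `C_n = μ{z : t(D₁,z) ≤ T_n}` is the realized coverage of the
calibrated uncertainty set, converges to the target `1-δ` as `n → ∞`. -/
theorem confidence_tendsto_target
    {Ω S : Type*} [MeasurableSpace Ω] [MeasurableSpace S]
    (P : Measure Ω) [IsProbabilityMeasure P]
    (m : ℕ)
    (ε δ : ℝ) (hε : ε ∈ Set.Ioo (0 : ℝ) 1) (hδ : δ ∈ Set.Ioo (0 : ℝ) 1)
    (D₁ : Ω → S) (hD₁ : Measurable D₁)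
    (ξ : (n : ℕ) → Fin n → Ω → (Fin m → ℝ))
    (hξmeas : ∀ n, ∀ i : Fin n, Measurable (ξ n i))
    (μ : Measure (Fin m → ℝ)) [IsProbabilityMeasure μ]
    (hiid : ∀ n : ℕ, (1 - ε) ^ n ≤ δ → iIndepFun (ξ n) P)
    (hlaw : ∀ n : ℕ, (1 - ε) ^ n ≤ δ → ∀ i : Fin n, Measure.map (ξ n i) P = μ)
    (hindep : ∀ n : ℕ, (1 - ε) ^ n ≤ δ → IndepFun D₁ (fun ω => fun i : Fin n => ξ n i ω) P)
    (t : S × (Fin m → ℝ) → ℝ) (ht : Measurable t)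
    (hatomless : ∀ s : S, ∀ x : ℝ, Measure.map (fun z => t (s, z)) μ {x} = 0)
    (istar : ℕ → ℕ)
    (histar : ∀ n : ℕ, (1 - ε) ^ n ≤ δ →
      IsLeast {r : ℕ | 1 ≤ r ∧ r ≤ n ∧
        1 - δ ≤ ∑ k ∈ Finset.range r, (n.choose k : ℝ) * (1 - ε) ^ k * ε ^ (n - k)}
        (istar n)) :
    Tendsto
      (fun n : ℕ => P {ω | ENNReal.ofReal (1 - ε) ≤
        μ {z | t (D₁ ω, z) ≤ orderStat (fun i => t (D₁ ω, ξ n i ω)) (istar n)}})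
      atTop (nhds (ENNReal.ofReal (1 - δ))) := by
  obtain ⟨hε0, hε1⟩ := hε
  obtain ⟨hδ0, hδ1⟩ := hδ
  have hlarge : ∀ᶠ n in atTop, (1 - ε) ^ n ≤ δ :=
    (tendsto_pow_atTop_nhds_zero_of_lt_one (by linarith) (by linarith)).eventually
      (ge_mem_nhds hδ0)
  have hsum : Tendsto (fun n => ∑ k ∈ Finset.range (istar n), binomTerm (1 - ε) ε n k) atTop
      (nhds (1 - δ)) :=
    tendsto_sum_binomTerm_of_isLeast (by linarith) hε0 (by ring) (by linarith) (by linarith)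
      (hlarge.mono histar)
  refine ((ENNReal.continuous_ofReal.tendsto _).comp hsum).congr' ?_
  filter_upwards [hlarge] with n hn
  obtain ⟨⟨h1, h2, -⟩, -⟩ := histar n hn
  exact (measure_coverage_eq_sum_binomTerm hε0 hε1 hD₁ (hξmeas n) (hiid n hn) (hlaw n hn)
    (hindep n hn) ht hatomless h1 h2).symm
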